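/- arXiv:2104.05070 — 6 statements merged into one kernel-verified Lean document; each statement's English description precedes it below -/
import Mathlib

section
/- In the voting game, assume additionally that V i > -c for every player i. Then there exists a pure Nash equilibrium x in which the set of voters {i : x i ≠ 0} is nonempty and every voter cheats (x i = -1 for every i with x i ≠ 0), if and only if N_SID ≤ |I| - N_thld (equivalently, the proportion of super-integrity drivers p_SID = N_SID/|I| satisfies p_SID ≤ (|I| - N_thld)/|I|). -/
open Finset

/-- Number of players who vote (choose a nonzero action). -/
def Nvo {I : Type*} [Fintype I] (x : I → ℤ) : ℕ :=
  (Finset.univ.filter fun i => x i ≠ 0).card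

/-- Number of players who report truth (action 1). -/
def Ntruth {I : Type*} [Fintype I] (x : I → ℤ) : ℕ :=
  (Finset.univ.filter fun i => x i = 1).card

/-- Number of players who cheat (action -1). -/
def Ncheat {I : Type*} [Fintype I] (x : I → ℤ) : ℕ :=
  (Finset.univ.filter fun i => x i = -1).card

/-- Payoff of player `i` in the voting game. -/
noncomputable def payoff {I : Type*} [Fintype I] (R c P : ℝ) (Nthld : ℕ) (V : I → ℝ)
    (x : I → ℤ) (i : I) : ℝ :=
  if x i = 0 then 0
  else if Nthld ≤ Nvo x ∧ 2 * Nvo x ≤ 3 * Ntruth x then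
    -- majority reports truth
    (if x i = 1 then R - c else -P - c - V i)
  else if Nthld ≤ Nvo x ∧ 2 * Nvo x ≤ 3 * Ncheat x then
    -- majority cheats
    (if x i = 1 then -P - c else R - c - V i)
  else
    -- fewer than `Nthld` voters, or no two-thirds consensus
    (if x i = 1 then -c else -c - V i)

/-- A profile is valid if every action lies in {1, -1, 0}. -/
def ValidProfile {I : Type*} (x : I → ℤ) : Prop :=
  ∀ i, x i = 1 ∨ x i = -1 ∨ x i = 0

/-- Pure Nash equilibrium: valid profile where no unilateral deviation
(to an action in {1, -1, 0}) improves a player's payoff. -/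
noncomputable def IsNash {I : Type*} [Fintype I] [DecidableEq I]
    (R c P : ℝ) (Nthld : ℕ) (V : I → ℝ) (x : I → ℤ) : Prop :=
  ValidProfile x ∧
  ∀ i : I, ∀ a : ℤ, (a = 1 ∨ a = -1 ∨ a = 0) →
    payoff R c P Nthld V (Function.update x i a) i ≤ payoff R c P Nthld V x i

/-- Number of super-integrity drivers (SIDs): players with `V i > R - c`. -/
noncomputable def NSID {I : Type*} [Fintype I] (R c : ℝ) (V : I → ℝ) : ℕ :=
  (Finset.univ.filter fun i => R - c < V i).card

lemma filter_split {I : Type*} [Fintype I] [DecidableEq I]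
    (x : I → ℤ) (i : I) (p : ℤ → Prop) [DecidablePred p] :
    (Finset.univ.filter fun j => p (x j)).card
      = ((Finset.univ.erase i).filter fun j => p (x j)).card + (if p (x i) then 1 else 0) := by
  have h : (Finset.univ : Finset I) = insert i (Finset.univ.erase i) :=
    (Finset.insert_erase (Finset.mem_univ i)).symm
  rw [h, Finset.filter_insert]
  split <;> simp [Finset.card_insert_of_notMem]

lemma filter_update {I : Type*} [Fintype I] [DecidableEq I]
    (x : I → ℤ) (i : I) (a : ℤ) (p : ℤ → Prop) [DecidablePred p] :
    (Finset.univ.filter fun j => p (Function.update x i a j)).card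
      = ((Finset.univ.erase i).filter fun j => p (x j)).card + (if p a then 1 else 0) := by
  rw [filter_split (Function.update x i a) i p]
  congr 1
  · congr 1
    apply Finset.filter_congr
    intro j hj
    rw [Function.update_of_ne (Finset.ne_of_mem_erase hj)]
  · simp

lemma count_update_aux {I : Type*} [Fintype I] [DecidableEq I] (x : I → ℤ) (i : I) (a : ℤ)
    (p : ℤ → Prop) [DecidablePred p] :
    (Finset.univ.filter fun j => p (Function.update x i a j)).card + (if p (x i) then 1 else 0)
      = (Finset.univ.filter fun j => p (x j)).card + (if p a then 1 else 0) := by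
  rw [filter_update, filter_split x i p]
  omega

lemma Nvo_update {I : Type*} [Fintype I] [DecidableEq I] (x : I → ℤ) (i : I) (a : ℤ) :
    Nvo (Function.update x i a) + (if x i ≠ 0 then 1 else 0)
      = Nvo x + (if a ≠ 0 then 1 else 0) :=
  count_update_aux x i a (fun z => z ≠ 0)

lemma Ntruth_update {I : Type*} [Fintype I] [DecidableEq I] (x : I → ℤ) (i : I) (a : ℤ) :
    Ntruth (Function.update x i a) + (if x i = 1 then 1 else 0)
      = Ntruth x + (if a = 1 then 1 else 0) :=
  count_update_aux x i a (fun z => z = 1)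

lemma Ncheat_update {I : Type*} [Fintype I] [DecidableEq I] (x : I → ℤ) (i : I) (a : ℤ) :
    Ncheat (Function.update x i a) + (if x i = -1 then 1 else 0)
      = Ncheat x + (if a = -1 then 1 else 0) :=
  count_update_aux x i a (fun z => z = -1)

/-- Assuming additionally `V i > -c` for every player, there exists a
pure Nash equilibrium with a nonempty set of voters in which every voter cheats,
iff `N_SID ≤ |I| - N_thld`. -/
theorem allCheat_NE_exists_iff {I : Type*} [Fintype I] [DecidableEq I] [Nonempty I]
    (R c P : ℝ) (Nthld : ℕ) (V : I → ℝ)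
    (hRc : c < R) (hc : 0 < c) (hP : 0 ≤ P) (hN : 2 ≤ Nthld)
    (hV : ∀ i, -c < V i) :
    (∃ x : I → ℤ, IsNash R c P Nthld V x ∧ (∃ i, x i ≠ 0) ∧ (∀ i, x i ≠ 0 → x i = -1)) ↔
      (NSID R c V : ℤ) ≤ (Fintype.card I : ℤ) - (Nthld : ℤ) := by
  classical
  constructor
  · rintro ⟨x, ⟨hvalid, hnash⟩, ⟨i0, hi0⟩, hcheat⟩
    have htruth : Ntruth x = 0 := by
      rw [Ntruth, Finset.card_eq_zero, Finset.filter_eq_empty_iff]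
      intro j _ h1
      have h2 := hcheat j (by rw [h1]; norm_num)
      omega
    have hcc : Ncheat x = Nvo x := by
      rw [Ncheat, Nvo]
      congr 1
      apply Finset.filter_congr
      intro j _
      exact ⟨fun h => by rw [h]; norm_num, fun h => hcheat j h⟩
    have hNvo_pos : 0 < Nvo x :=
      Finset.card_pos.mpr ⟨i0, Finset.mem_filter.mpr ⟨Finset.mem_univ _, hi0⟩⟩
    have hth : Nthld ≤ Nvo x := by
      by_contra hlt
      push_neg at hlt
      have hx0 : x i0 = -1 := hcheat i0 hi0
      have h1 := hnash i0 0 (Or.inr (Or.inr rfl))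
      have hdev : payoff R c P Nthld V (Function.update x i0 0) i0 = 0 := by
        rw [payoff, if_pos (Function.update_self i0 0 x)]
      have hcur : payoff R c P Nthld V x i0 = -c - V i0 := by
        rw [payoff, if_neg (by rw [hx0]; norm_num),
          if_neg (by rintro ⟨h2, -⟩; omega), if_neg (by rintro ⟨h2, -⟩; omega),
          if_neg (by rw [hx0]; norm_num)]
      rw [hdev, hcur] at h1
      have := hV i0
      linarith
    have hSID : ∀ i, R - c < V i → x i = 0 := by
      intro i hSi
      by_contra hne
      have hxi : x i = -1 := hcheat i hne
      have h1 := hnash i 0 (Or.inr (Or.inr rfl))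
      have hdev : payoff R c P Nthld V (Function.update x i 0) i = 0 := by
        rw [payoff, if_pos (Function.update_self i 0 x)]
      have hcur : payoff R c P Nthld V x i = R - c - V i := by
        rw [payoff, if_neg (by rw [hxi]; norm_num),
          if_neg (by rintro ⟨-, h2⟩; rw [htruth] at h2; omega),
          if_pos ⟨hth, by rw [hcc]; omega⟩, if_neg (by rw [hxi]; norm_num)]
      rw [hdev, hcur] at h1
      linarith
    have hdisj : Disjoint (Finset.univ.filter fun i => x i ≠ 0)
        (Finset.univ.filter fun i => R - c < V i) := by
      rw [Finset.disjoint_left]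
      intro i h1 h2
      exact (Finset.mem_filter.mp h1).2 (hSID i (Finset.mem_filter.mp h2).2)
    have hsum : Nvo x + NSID R c V ≤ Fintype.card I := by
      rw [Nvo, NSID, ← Finset.card_union_of_disjoint hdisj, ← Finset.card_univ]
      exact Finset.card_le_card (Finset.subset_univ _)
    omega
  · intro hcard
    set S := Finset.univ.filter (fun i => ¬ (R - c < V i)) with hS
    have hm : Fintype.card I = NSID R c V + S.card := by
      rw [NSID, hS, Finset.card_filter_add_card_filter_not, Finset.card_univ]
    have hmge : Nthld ≤ S.card := by omega
    set x : I → ℤ := fun i => if R - c < V i then 0 else -1 with hxdef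
    have hx0 : ∀ i, R - c < V i → x i = 0 := fun i h => by simp [hxdef, h]
    have hx1 : ∀ i, ¬ (R - c < V i) → x i = -1 := fun i h => by simp [hxdef, h]
    have hxcheat : ∀ i, x i ≠ 0 → x i = -1 := by
      intro i h
      by_cases hi : R - c < V i
      · exact absurd (hx0 i hi) h
      · exact hx1 i hi
    have hNvo : Nvo x = S.card := by
      rw [Nvo, hS]
      congr 1
      apply Finset.filter_congr
      intro j _
      constructor
      · intro h hc2; exact h (hx0 j hc2)
      · intro h; rw [hx1 j h]; norm_num
    have hNtruth : Ntruth x = 0 := by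
      rw [Ntruth, Finset.card_eq_zero, Finset.filter_eq_empty_iff]
      intro j _ h1
      by_cases hj : R - c < V j
      · rw [hx0 j hj] at h1; norm_num at h1
      · rw [hx1 j hj] at h1; norm_num at h1
    have hNcheat : Ncheat x = S.card := by
      rw [Ncheat, hS]
      congr 1
      apply Finset.filter_congr
      intro j _
      constructor
      · intro h hc2; rw [hx0 j hc2] at h; norm_num at h
      · intro h; exact hx1 j h
    refine ⟨x, ⟨?_, ?_⟩, ?_, hxcheat⟩
    · intro i
      by_cases hi : R - c < V i
      · exact Or.inr (Or.inr (hx0 i hi))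
      · exact Or.inr (Or.inl (hx1 i hi))
    · intro i a ha
      have hvo := Nvo_update x i a
      have htr := Ntruth_update x i a
      have hch := Ncheat_update x i a
      by_cases hi : R - c < V i
      -- Case A : x i = 0
      · have hxi : x i = 0 := hx0 i hi
        have hcur : payoff R c P Nthld V x i = 0 := by rw [payoff, if_pos hxi]
        rw [hcur]
        rcases ha with rfl | rfl | rfl
        · -- a = 1
          rw [hxi] at hvo htr hch
          simp only [hxi] at hvo htr hch
          norm_num at hvo htr hch
          have hvo' : Nvo (Function.update x i 1) = S.card + 1 := by rw [hvo, hNvo]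
          have htr' : Ntruth (Function.update x i 1) = 1 := by rw [htr, hNtruth]
          have hch' : Ncheat (Function.update x i 1) = S.card := by rw [hch, hNcheat]
          rw [payoff, if_neg (by rw [Function.update_self]; norm_num),
            if_neg (by rintro ⟨-, h2⟩; rw [hvo', htr'] at h2; omega),
            if_pos ⟨by rw [hvo']; omega, by rw [hvo', hch']; omega⟩,
            if_pos (Function.update_self i 1 x)]
          linarith
        · -- a = -1
          simp only [hxi] at hvo htr hch
          norm_num at hvo htr hch
          have hvo' : Nvo (Function.update x i (-1)) = S.card + 1 := by rw [hvo, hNvo]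
          have htr' : Ntruth (Function.update x i (-1)) = 0 := by rw [htr, hNtruth]
          have hch' : Ncheat (Function.update x i (-1)) = S.card + 1 := by rw [hch, hNcheat]
          rw [payoff, if_neg (by rw [Function.update_self]; norm_num),
            if_neg (by rintro ⟨-, h2⟩; rw [hvo', htr'] at h2; omega),
            if_pos ⟨by rw [hvo']; omega, by rw [hvo', hch']; omega⟩,
            if_neg (by rw [Function.update_self]; norm_num)]
          linarith
        · -- a = 0
          have : Function.update x i 0 = x := by rw [← hxi]; exact Function.update_eq_self i x
          rw [this, payoff, if_pos hxi]
      -- Case B : x i = -1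
      · have hxi : x i = -1 := hx1 i hi
        push_neg at hi
        have hcur : payoff R c P Nthld V x i = R - c - V i := by
          rw [payoff, if_neg (by rw [hxi]; norm_num),
            if_neg (by rintro ⟨-, h2⟩; rw [hNvo, hNtruth] at h2; omega),
            if_pos ⟨by rw [hNvo]; omega, by rw [hNvo, hNcheat]; omega⟩,
            if_neg (by rw [hxi]; norm_num)]
        rw [hcur]
        rcases ha with rfl | rfl | rfl
        · -- a = 1
          simp only [hxi] at hvo htr hch
          norm_num at hvo htr hch
          have hvo' : Nvo (Function.update x i 1) = S.card := by
            rw [hNvo] at hvo; omega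
          have htr' : Ntruth (Function.update x i 1) = 1 := by rw [htr, hNtruth]
          have hch' : Ncheat (Function.update x i 1) + 1 = S.card := by
            rw [hNcheat] at hch; omega
          rw [payoff, if_neg (by rw [Function.update_self]; norm_num),
            if_neg (by rintro ⟨-, h2⟩; rw [hvo', htr'] at h2; omega)]
          split_ifs with h1 h2 h3
          · linarith
          · linarith
          · linarith
          · linarith
        · -- a = -1
          have : Function.update x i (-1) = x := by rw [← hxi]; exact Function.update_eq_self i x
          rw [this, hcur]
        · -- a = 0
          have hdev : payoff R c P Nthld V (Function.update x i 0) i = 0 := by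
            rw [payoff, if_pos (Function.update_self i 0 x)]
          rw [hdev]
          linarith
    · have : 0 < S.card := by omega
      obtain ⟨i, hi⟩ := Finset.card_pos.mp this
      rw [hS, Finset.mem_filter] at hi
      exact ⟨i, by rw [hx1 i hi.2]; norm_num⟩
end

section
/- In the voting game, if player i is a super-integrity driver (V i > R - c), then for every profile x with x i = -1 the payoff u_i(x) is strictly negative; consequently, replacing i's action by 0 (abstain) strictly increases i's payoff, i.e., cheating is strictly dominated by abstaining for every SID. -/
open Finset

/-- For a super-integrity driver, cheating yields a strictly negative
payoff in every profile, and abstaining strictly improves the payoff. -/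
theorem SID_cheating_dominated {I : Type*} [Fintype I] [DecidableEq I] [Nonempty I]
    (R c P : ℝ) (Nthld : ℕ) (V : I → ℝ)
    (hRc : c < R) (hc : 0 < c) (hP : 0 ≤ P) (hN : 2 ≤ Nthld)
    (i : I) (hSID : R - c < V i)
    (x : I → ℤ) (hx : ValidProfile x) (hxi : x i = -1) :
    payoff R c P Nthld V x i < 0 ∧
      payoff R c P Nthld V x i < payoff R c P Nthld V (Function.update x i 0) i := by
  have hneg : payoff R c P Nthld V x i < 0 := by
    unfold payoff
    simp only [hxi]
    norm_num
    split_ifs <;> linarith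
  refine ⟨hneg, ?_⟩
  have h0 : payoff R c P Nthld V (Function.update x i 0) i = 0 := by
    unfold payoff
    simp [Function.update_self]
  linarith
end

section
/- In the voting game, in every pure Nash equilibrium x, no super-integrity driver cheats: for every player i with V i > R - c, x i ≠ -1. -/
open Finset

/-- In every pure Nash equilibrium, no super-integrity driver cheats. -/
theorem no_SID_cheats_in_NE {I : Type*} [Fintype I] [DecidableEq I] [Nonempty I]
    (R c P : ℝ) (Nthld : ℕ) (V : I → ℝ)
    (hRc : c < R) (hc : 0 < c) (hP : 0 ≤ P) (hN : 2 ≤ Nthld)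
    (x : I → ℤ) (hx : IsNash R c P Nthld V x)
    (i : I) (hSID : R - c < V i) :
    x i ≠ -1 := by
  intro hxi
  have hdev := hx.2 i 0 (Or.inr (Or.inr rfl))
  have h0 : payoff R c P Nthld V (Function.update x i 0) i = 0 := by
    simp [payoff, Function.update_self]
  rw [h0] at hdev
  have hV : 0 < V i := lt_trans (by linarith) hSID
  have : payoff R c P Nthld V x i < 0 := by
    unfold payoff
    rw [if_neg (by rw [hxi]; norm_num)]
    simp only [hxi]
    norm_num
    split_ifs <;> linarith
  linarith
end

section
/- In the voting game, assume N_SID ≤ |I| - N_thld. Then the profile x* defined by x*_i = -1 for every non-SID (every i with V i ≤ R - c) and x*_i = 0 for every SID (every i with V i > R - c) is a pure Nash equilibrium; moreover in x* the set of voters is nonempty and every voter cheats. -/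
open Finset

/-- If `N_SID ≤ |I| - N_thld`, the profile in which every non-SID
cheats and every SID abstains is a pure Nash equilibrium with a nonempty set of
voters, all of whom cheat. -/
theorem allCheat_NE_of_few_SID {I : Type*} [Fintype I] [DecidableEq I] [Nonempty I]
    (R c P : ℝ) (Nthld : ℕ) (V : I → ℝ)
    (hRc : c < R) (hc : 0 < c) (hP : 0 ≤ P) (hN : 2 ≤ Nthld)
    (hSID : (NSID R c V : ℤ) ≤ (Fintype.card I : ℤ) - (Nthld : ℤ)) :
    IsNash R c P Nthld V (fun i => if R - c < V i then 0 else -1) ∧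
      (∃ i : I, (if R - c < V i then (0 : ℤ) else -1) ≠ 0) ∧
      (∀ i : I, (if R - c < V i then (0 : ℤ) else -1) ≠ 0 →
        (if R - c < V i then (0 : ℤ) else -1) = -1) := by
  classical
  set x : I → ℤ := fun i => if R - c < V i then (0 : ℤ) else -1 with hxdef
  have hxval : ∀ j, x j = 0 ∨ x j = -1 := by
    intro j; by_cases h : R - c < V j <;> simp [hxdef, h]
  have hfe : (Finset.univ.filter fun j => x j ≠ 0)
      = (Finset.univ.filter fun j => ¬ (R - c < V j)) := by
    apply Finset.filter_congr
    intro j _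
    by_cases h : R - c < V j <;> simp [hxdef, h]
  have hsum : NSID R c V + Nvo x = Fintype.card I := by
    unfold NSID Nvo
    rw [hfe]
    rw [Finset.card_filter_add_card_filter_not (p := fun j => R - c < V j)]
    exact Finset.card_univ
  have hNvo : Nthld ≤ Nvo x := by omega
  have hNvo2 : 2 ≤ Nvo x := by omega
  have hNt : Ntruth x = 0 := by
    unfold Ntruth
    rw [Finset.card_eq_zero, Finset.filter_eq_empty_iff]
    intro j _
    rcases hxval j with h | h <;> simp [h]
  have hNc : Ncheat x = Nvo x := by
    unfold Ncheat Nvo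
    apply congrArg
    apply Finset.filter_congr
    intro j _
    rcases hxval j with h | h <;> simp [h]
  have hpay : ∀ i, x i = -1 → payoff R c P Nthld V x i = R - c - V i := by
    intro i hi
    unfold payoff
    rw [hi]
    have h1 : ¬ (Nthld ≤ Nvo x ∧ 2 * Nvo x ≤ 3 * Ntruth x) := by
      rintro ⟨_, h2⟩; rw [hNt] at h2; omega
    have h2 : Nthld ≤ Nvo x ∧ 2 * Nvo x ≤ 3 * Ncheat x := by
      refine ⟨hNvo, ?_⟩; rw [hNc]; omega
    rw [if_neg (by norm_num : ¬ ((-1 : ℤ) = 0)), if_neg h1, if_pos h2,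
      if_neg (by norm_num : ¬ ((-1 : ℤ) = 1))]
  have hNtu : ∀ i : I, Ntruth (Function.update x i 1) = 1 := by
    intro i
    unfold Ntruth
    have h : (Finset.univ.filter fun j => Function.update x i 1 j = 1) = {i} := by
      ext j
      simp only [Finset.mem_filter, Finset.mem_univ, true_and, Finset.mem_singleton]
      constructor
      · intro h
        by_contra hji
        rw [Function.update_of_ne hji] at h
        rcases hxval j with h0 | h0 <;> rw [h0] at h <;> norm_num at h
      · rintro rfl; simp
    rw [h, Finset.card_singleton]
  have hNvu : ∀ i : I, Nvo x ≤ Nvo (Function.update x i 1) := by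
    intro i
    apply Finset.card_le_card
    intro j hj
    simp only [Finset.mem_filter, Finset.mem_univ, true_and] at hj ⊢
    by_cases hji : j = i
    · subst hji; simp
    · rw [Function.update_of_ne hji]; exact hj
  have hnt1 : ∀ i : I, ¬ (Nthld ≤ Nvo (Function.update x i 1) ∧
      2 * Nvo (Function.update x i 1) ≤ 3 * Ntruth (Function.update x i 1)) := by
    intro i
    rintro ⟨_, h2⟩
    have h3 := hNtu i
    have h4 := hNvu i
    omega
  refine ⟨⟨?_, ?_⟩, ?_, ?_⟩
  · intro i
    rcases hxval i with h | h
    · exact Or.inr (Or.inr h)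
    · exact Or.inr (Or.inl h)
  · intro i a ha
    by_cases hVi : R - c < V i
    · -- SID : x i = 0, payoff 0
      have hx_i : x i = 0 := by simp [hxdef, hVi]
      have hpx : payoff R c P Nthld V x i = 0 := by
        unfold payoff; rw [hx_i]; simp
      rw [hpx]
      rcases ha with rfl | rfl | rfl
      · -- deviate to 1
        unfold payoff
        simp only [Function.update_self]
        rw [if_neg (by norm_num : ¬ ((1 : ℤ) = 0)), if_neg (hnt1 i)]
        split_ifs <;> first | linarith | contradiction | (exfalso; omega)
      · -- deviate to -1 : all payoffs negative since V i > R - c > 0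
        have hV0 : 0 < V i := by linarith
        unfold payoff
        simp only [Function.update_self]
        rw [if_neg (by norm_num : ¬ ((-1 : ℤ) = 0))]
        split_ifs <;> first | linarith | contradiction | (exfalso; omega)
      · -- deviate to 0 : same profile
        have h0 : Function.update x i 0 = x := by rw [← hx_i]; exact Function.update_eq_self i x
        rw [h0, hpx]
    · -- non-SID : x i = -1
      have hx_i : x i = -1 := by simp [hxdef, hVi]
      rw [hpay i hx_i]
      have h0 : (0 : ℝ) ≤ R - c - V i := by push_neg at hVi; linarith
      rcases ha with rfl | rfl | rfl
      · unfold payoff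
        simp only [Function.update_self]
        rw [if_neg (by norm_num : ¬ ((1 : ℤ) = 0)), if_neg (hnt1 i)]
        split_ifs <;> first | linarith | contradiction | (exfalso; omega)
      · have h1 : Function.update x i (-1) = x := by
          rw [← hx_i]; exact Function.update_eq_self i x
        rw [h1, hpay i hx_i]
      · unfold payoff
        simp only [Function.update_self]
        simpa using h0
  · have hpos : 0 < Nvo x := by omega
    unfold Nvo at hpos
    rw [Finset.card_pos] at hpos
    obtain ⟨j, hj⟩ := hpos
    simp only [Finset.mem_filter, Finset.mem_univ, true_and] at hj
    exact ⟨j, hj⟩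
  · intro i hi
    rcases hxval i with h | h
    · exact absurd h hi
    · exact h
end

section
/- In the voting game, assume additionally that V i > -c for every player i and that N_thld ≤ |I|. Then the profile in which every player reports truth (x i = 1 for all i ∈ I) is a pure Nash equilibrium, and each player's payoff in it equals R - c > 0. -/
open Finset

/-- If `V i > -c` for all players and `N_thld ≤ |I|`, the all-truth
profile is a pure Nash equilibrium with payoff `R - c > 0` for every player. -/
theorem allTruth_is_NE {I : Type*} [Fintype I] [DecidableEq I] [Nonempty I]
    (R c P : ℝ) (Nthld : ℕ) (V : I → ℝ)
    (hRc : c < R) (hc : 0 < c) (hP : 0 ≤ P) (hN : 2 ≤ Nthld)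
    (hV : ∀ i, -c < V i) (hcard : Nthld ≤ Fintype.card I) :
    IsNash R c P Nthld V (fun _ => 1) ∧
      (∀ i : I, payoff R c P Nthld V (fun _ => 1) i = R - c) ∧
      0 < R - c := by

  have hpay : ∀ i : I, payoff R c P Nthld V (fun _ => 1) i = R - c := by
    intro i
    have hvo : Nvo (fun _ : I => (1:ℤ)) = Fintype.card I := by
      simp [Nvo, Finset.filter_true_of_mem, Finset.card_univ]
    have htr : Ntruth (fun _ : I => (1:ℤ)) = Fintype.card I := by
      simp [Ntruth, Finset.filter_true_of_mem, Finset.card_univ]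
    simp [payoff, hvo, htr]
    intro h
    omega
  refine ⟨⟨fun i => Or.inl rfl, ?_⟩, hpay, by linarith⟩
  intro i a ha
  rw [hpay i]
  rcases ha with rfl | rfl | rfl
  · have : Function.update (fun _ : I => (1:ℤ)) i 1 = fun _ => 1 := by
      funext j; by_cases h : j = i <;> simp [Function.update, h]
    rw [this, hpay i]
  · set y := Function.update (fun _ : I => (1:ℤ)) i (-1) with hy
    have hyi : y i = -1 := by simp [hy]
    have hvo : Nvo y = Fintype.card I := by
      have : ∀ j, y j ≠ 0 := by
        intro j; by_cases h : j = i <;> simp [hy, Function.update, h]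
      simp [Nvo, Finset.filter_true_of_mem, this, Finset.card_univ]
    have hch : Ncheat y = 1 := by
      have : (Finset.univ.filter fun j => y j = -1) = {i} := by
        ext j
        by_cases h : j = i <;> simp [hy, Function.update, h]
      simp [Ncheat, this]
    have hVi := hV i
    simp only [payoff, hyi, hvo, hch]
    norm_num
    split
    · linarith
    · split
      · omega
      · linarith
  · have : payoff R c P Nthld V (Function.update (fun _ : I => (1:ℤ)) i 0) i = 0 := by
      simp [payoff]
    rw [this]; linarith
end

section
/- In the voting game, assume additionally that V i > -c for every player i. Then the profile in which every player abstains (x i = 0 for all i ∈ I) is a pure Nash equilibrium, and each player's payoff in it equals 0. -/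
open Finset

/-- If `V i > -c` for all players, the all-abstain profile is a pure
Nash equilibrium with payoff 0 for every player. -/
theorem allAbstain_is_NE {I : Type*} [Fintype I] [DecidableEq I] [Nonempty I]
    (R c P : ℝ) (Nthld : ℕ) (V : I → ℝ)
    (hRc : c < R) (hc : 0 < c) (hP : 0 ≤ P) (hN : 2 ≤ Nthld)
    (hV : ∀ i, -c < V i) :
    IsNash R c P Nthld V (fun _ => 0) ∧
      (∀ i : I, payoff R c P Nthld V (fun _ => 0) i = 0) := by
  have hzero : ∀ i : I, payoff R c P Nthld V (fun _ => 0) i = 0 := by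
    intro i; simp [payoff]
  have hNvo : ∀ (i : I) (a : ℤ), a ≠ 0 →
      Nvo (Function.update (fun _ : I => (0:ℤ)) i a) = 1 := by
    intro i a ha
    unfold Nvo
    have : (Finset.univ.filter fun j => Function.update (fun _ : I => (0:ℤ)) i a j ≠ 0) = {i} := by
      ext j
      simp only [Finset.mem_filter, Finset.mem_univ, true_and, Finset.mem_singleton]
      constructor
      · intro h; by_contra hji
        rw [Function.update_of_ne hji] at h; exact h rfl
      · intro h; subst h; simpa [Function.update_self] using ha
    rw [this, Finset.card_singleton]
  refine ⟨⟨fun i => Or.inr (Or.inr rfl), ?_⟩, hzero⟩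
  intro i a ha
  rw [hzero i]
  rcases ha with rfl | rfl | rfl
  · have h1 : ¬ Nthld ≤ Nvo (Function.update (fun _ : I => (0:ℤ)) i 1) := by
      rw [hNvo i 1 (by norm_num)]; omega
    simp only [payoff, Function.update_self, h1, false_and, if_false, if_pos rfl,
      if_neg (by norm_num : (1:ℤ) ≠ 0), if_true]
    linarith
  · have h1 : ¬ Nthld ≤ Nvo (Function.update (fun _ : I => (0:ℤ)) i (-1)) := by
      rw [hNvo i (-1) (by norm_num)]; omega
    simp only [payoff, Function.update_self, h1, false_and, if_false,
      if_neg (by norm_num : (-1:ℤ) ≠ 0), if_neg (by norm_num : (-1:ℤ) ≠ 1)]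
    have := hV i
    linarith
  · simp [payoff, Function.update_self]
end
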